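/- arXiv:1809.02684 — 2 statements merged into one kernel-verified Lean document; each statement's English description precedes it below -/
import Mathlib

section
/- For every k ≥ 2, the coefficient of the monomial x_1^{k-1} x_2^0 x_3^2 x_4^4 ⋯ x_k^{2k-4} in f_k(x_1, ..., x_k) = ∏_{1 ≤ i < j ≤ k} (x_j - x_i) · ∏_{2 ≤ i < j ≤ k} (x_i + ... + x_j) over the integers equals (-1)^{k-1}. -/
/-!
The monomial is the leading monomial of `f_k` for the lexicographic order in which `x_1` is the
most significant variable, followed by `x_k > x_{k-1} > ⋯ > x_2`. For this order the leading term
of `x_j - x_i` is `-x_1` if `i = 1` and `x_j` otherwise, and that of `x_i + ⋯ + x_j` is `x_j`.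
Hence the leading coefficient of `f_k` is the product of these leading coefficients, one sign
`-1` for each of the `k - 1` factors `x_j - x_1`, and the leading monomial is the product of
the leading monomials: `x_j` (`j ≥ 2`) is picked by the `j - 2` factors `x_j - x_i` and the
`j - 2` factors `x_i + ⋯ + x_j` with `2 ≤ i < j`.
-/

open MvPolynomial

/-- `f_k = ∏_{i<j} (x_j - x_i) · ∏_{2 ≤ i < j} (x_i + ⋯ + x_j)` (0-indexed variables). -/
noncomputable def fPoly (k : ℕ) : MvPolynomial (Fin k) ℤ :=
  (∏ q ∈ Finset.univ.filter (fun q : Fin k × Fin k => q.1 < q.2), (X q.2 - X q.1)) *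
  ∏ q ∈ Finset.univ.filter (fun q : Fin k × Fin k => 0 < (q.1 : ℕ) ∧ q.1 < q.2),
    (∑ l ∈ Finset.Icc q.1 q.2, X l)

open Finset MonomialOrder
open Finsupp (single)

namespace MonomialOrder

section lexBy

variable {σ : Type*} [Finite σ]

noncomputable def lexBy (r : σ → ℕ) (hr : Function.Injective r) : MonomialOrder σ :=
  letI := LinearOrder.lift' r hr
  lex

theorem lexBy_single_lt_single {r : σ → ℕ} (hr : Function.Injective r) {a b : σ}
    (h : r a < r b) : single b 1 ≺[lexBy r hr] single a 1 := by
  let := LinearOrder.lift' r hr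
  exact Finsupp.Lex.single_lt_iff.mpr h

end lexBy

variable {σ R : Type*} [CommRing R] (m : MonomialOrder σ)

theorem degree_leadingCoeff_prod {ι : Type*} {s : Finset ι} {P : ι → MvPolynomial σ R}
    {D : ι → σ →₀ ℕ} {c : ι → R}
    (h : ∀ i ∈ s, m.degree (P i) = D i ∧ m.leadingCoeff (P i) = c i)
    (hc : ∀ i ∈ s, IsRegular (c i)) :
    m.degree (∏ i ∈ s, P i) = ∑ i ∈ s, D i ∧
      m.leadingCoeff (∏ i ∈ s, P i) = ∏ i ∈ s, c i := by
  have hreg i (hi : i ∈ s) : IsRegular (m.leadingCoeff (P i)) := (h i hi).2 ▸ hc i hi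
  rw [m.degree_prod_of_regular hreg, m.leadingCoeff_prod_of_regular hreg]
  exact ⟨sum_congr rfl fun i hi => (h i hi).1, prod_congr rfl fun i hi => (h i hi).2⟩

variable [Nontrivial R] {a b : σ}

theorem degree_X_sub_X (h : single b 1 ≺[m] single a 1) :
    m.degree (X a - X b : MvPolynomial σ R) = single a 1 ∧
      m.leadingCoeff (X a - X b : MvPolynomial σ R) = 1 := by
  have hlt : m.degree (X b : MvPolynomial σ R) ≺[m] m.degree (X a : MvPolynomial σ R) := by
    rwa [m.degree_X, m.degree_X]
  rw [m.degree_sub_of_lt hlt, m.leadingCoeff_sub_of_lt hlt, m.degree_X, m.leadingCoeff_X]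
  exact ⟨rfl, rfl⟩

theorem degree_sum_X_lt {s : Finset σ} (h : ∀ l ∈ s, single l 1 ≺[m] single a 1) :
    m.degree (∑ l ∈ s, X l : MvPolynomial σ R) ≺[m] single a 1 := by
  refine lt_of_le_of_lt m.degree_sum_le ((Finset.sup_lt_iff ?_).mpr fun l hl => ?_)
  · rw [bot_lt_iff_ne_bot, m.bot_eq_zero, Ne, m.toSyn_eq_zero_iff]
    simp
  · rw [m.degree_X]
    exact h l hl

theorem degree_sum_X {s : Finset σ} (ha : a ∈ s)
    (h : ∀ l ∈ s, l ≠ a → single l 1 ≺[m] single a 1) :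
    m.degree (∑ l ∈ s, X l : MvPolynomial σ R) = single a 1 ∧
      m.leadingCoeff (∑ l ∈ s, X l : MvPolynomial σ R) = 1 := by
  classical
  have hlt : m.degree (∑ l ∈ s.erase a, X l : MvPolynomial σ R) ≺[m]
      m.degree (X a : MvPolynomial σ R) := by
    rw [m.degree_X]
    exact m.degree_sum_X_lt fun l hl => h l (mem_of_mem_erase hl) (ne_of_mem_erase hl)
  rw [← add_sum_erase s _ ha, m.degree_add_of_lt hlt, m.leadingCoeff_add_of_lt hlt,
    m.degree_X, m.leadingCoeff_X]
  exact ⟨rfl, rfl⟩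

end MonomialOrder

theorem Finsupp.finset_sum_single_one_apply {ι α : Type*} [DecidableEq α] (s : Finset ι)
    (g : ι → α) (a : α) : (∑ x ∈ s, single (g x) 1) a = #{x ∈ s | g x = a} := by
  simp [Finsupp.finsetSum_apply, Finsupp.single_apply, sum_boole]

theorem card_pairs_fst_eq_zero (k : ℕ) :
    #{q : Fin k × Fin k | (q.1 : ℕ) = 0 ∧ q.1 < q.2} = k - 1 := by
  calc _ = #(Ioo 0 k) := by
        refine card_nbij (fun q => (q.2 : ℕ)) (fun q hq => ?_) (fun q hq q' hq' h => ?_) ?_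
        · simp only [coe_filter, mem_univ, true_and, Set.mem_ofPred_eq, coe_Ioo,
            Set.mem_Ioo] at hq ⊢
          omega
        · simp only [coe_filter, mem_univ, true_and, Set.mem_ofPred_eq] at hq hq' h
          exact Prod.ext (Fin.ext (by omega)) (Fin.ext h)
        · intro b hb
          simp only [coe_Ioo, Set.mem_Ioo] at hb
          exact ⟨(⟨0, by omega⟩, ⟨b, hb.2⟩), by simp [hb.1], rfl⟩
    _ = k - 1 := by simp

theorem card_pairs_snd_eq (k : ℕ) (j : Fin k) :
    #{q : Fin k × Fin k | 0 < (q.1 : ℕ) ∧ q.1 < q.2 ∧ q.2 = j} = j - 1 := by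
  calc _ = #(Ioo 0 (j : ℕ)) := by
        refine card_nbij (fun q => (q.1 : ℕ)) (fun q hq => ?_) (fun q hq q' hq' h => ?_) ?_
        · simp only [coe_filter, mem_univ, true_and, Set.mem_ofPred_eq, coe_Ioo,
            Set.mem_Ioo] at hq ⊢
          obtain ⟨h0, hlt, rfl⟩ := hq
          omega
        · simp only [coe_filter, mem_univ, true_and, Set.mem_ofPred_eq] at hq hq' h
          exact Prod.ext (Fin.ext h) (hq.2.2.trans hq'.2.2.symm)
        · intro a ha
          simp only [coe_Ioo, Set.mem_Ioo] at ha
          exact ⟨(⟨a, by omega⟩, j), by simp [ha.1, Fin.mk_lt_mk.mpr ha.2], rfl⟩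
    _ = j - 1 := by simp

theorem sum_single_ite_apply (k : ℕ) (i : Fin k) :
    (∑ q : Fin k × Fin k with q.1 < q.2, single (if (q.1 : ℕ) = 0 then q.1 else q.2) 1) i =
      if (i : ℕ) = 0 then k - 1 else (i : ℕ) - 1 := by
  rw [Finsupp.finset_sum_single_one_apply, filter_filter]
  split_ifs with hi
  · rw [← card_pairs_fst_eq_zero k]
    congr 1
    refine filter_congr fun q _ => ?_
    split_ifs with hq <;>
      simp only [Fin.ext_iff, hq, hi, and_true, true_and, false_and, iff_false, not_and]
    omega
  · rw [← card_pairs_snd_eq k i]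
    congr 1
    refine filter_congr fun q _ => ?_
    split_ifs with hq <;> simp only [Fin.ext_iff, hq, lt_self_iff_false, false_and, iff_false,
      not_and, iff_and_self, and_imp] <;> omega

theorem sum_single_snd_apply (k : ℕ) (i : Fin k) :
    (∑ q : Fin k × Fin k with 0 < (q.1 : ℕ) ∧ q.1 < q.2, single q.2 1) i =
      (i : ℕ) - 1 := by
  rw [Finsupp.finset_sum_single_one_apply, filter_filter, ← card_pairs_snd_eq k i]
  exact congrArg card (filter_congr fun q _ => and_assoc)

/-- `lexBy` makes smaller ranks more significant, so this orders the variables as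
`x_0 > x_{k-1} > x_{k-2} > ⋯ > x_1` (0-indexed). -/
def fPolyRank (k : ℕ) (i : Fin k) : ℕ := if (i : ℕ) = 0 then 0 else k - i

theorem fPolyRank_injective (k : ℕ) : Function.Injective (fPolyRank k) := by
  intro i j h
  simp only [fPolyRank] at h
  ext
  split_ifs at h <;> omega

theorem fPolyRank_lt_of_val_eq_zero {k : ℕ} {a b : Fin k} (ha : (a : ℕ) = 0)
    (hb : (b : ℕ) ≠ 0) : fPolyRank k a < fPolyRank k b := by
  simp only [fPolyRank, ha, hb, if_true, if_false]
  omega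

theorem fPolyRank_lt_of_lt {k : ℕ} {a b : Fin k} (ha : (a : ℕ) ≠ 0) (hab : a < b) :
    fPolyRank k b < fPolyRank k a := by
  simp only [fPolyRank, ha, if_false]
  split_ifs <;> omega

noncomputable def fPolyOrder (k : ℕ) : MonomialOrder (Fin k) :=
  lexBy (fPolyRank k) (fPolyRank_injective k)

theorem fPolyOrder_single_lt_single {k : ℕ} {a b : Fin k}
    (h : fPolyRank k a < fPolyRank k b) : single b 1 ≺[fPolyOrder k] single a 1 :=
  lexBy_single_lt_single _ h

theorem degree_X_sub_X_fPolyOrder {k : ℕ} {i j : Fin k} (hij : i < j) :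
    (fPolyOrder k).degree (X j - X i : MvPolynomial (Fin k) ℤ) =
        single (if (i : ℕ) = 0 then i else j) 1 ∧
      (fPolyOrder k).leadingCoeff (X j - X i : MvPolynomial (Fin k) ℤ) =
        if (i : ℕ) = 0 then -1 else 1 := by
  split_ifs with hi
  · rw [← neg_sub, degree_neg, leadingCoeff_neg, neg_eq_iff_eq_neg, neg_neg]
    exact (fPolyOrder k).degree_X_sub_X
      (fPolyOrder_single_lt_single (fPolyRank_lt_of_val_eq_zero hi (by omega)))
  · exact (fPolyOrder k).degree_X_sub_X (fPolyOrder_single_lt_single (fPolyRank_lt_of_lt hi hij))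

theorem degree_sum_Icc_X_fPolyOrder {k : ℕ} {i j : Fin k} (hi : 0 < (i : ℕ)) (hij : i ≤ j) :
    (fPolyOrder k).degree (∑ l ∈ Icc i j, X l : MvPolynomial (Fin k) ℤ) = single j 1 ∧
      (fPolyOrder k).leadingCoeff (∑ l ∈ Icc i j, X l : MvPolynomial (Fin k) ℤ) = 1 := by
  refine (fPolyOrder k).degree_sum_X (mem_Icc.mpr ⟨hij, le_rfl⟩) fun l hl hlj => ?_
  rw [mem_Icc] at hl
  exact fPolyOrder_single_lt_single (fPolyRank_lt_of_lt (by omega) (lt_of_le_of_ne hl.2 hlj))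

theorem degree_prod_X_sub_X_fPolyOrder (k : ℕ) :
    (fPolyOrder k).degree
        (∏ q : Fin k × Fin k with q.1 < q.2, (X q.2 - X q.1 : MvPolynomial (Fin k) ℤ)) =
        ∑ q : Fin k × Fin k with q.1 < q.2, single (if (q.1 : ℕ) = 0 then q.1 else q.2) 1 ∧
      (fPolyOrder k).leadingCoeff
        (∏ q : Fin k × Fin k with q.1 < q.2, (X q.2 - X q.1 : MvPolynomial (Fin k) ℤ)) =
        (-1) ^ (k - 1) := by
  refine ((fPolyOrder k).degree_leadingCoeff_prod
    (fun q hq => degree_X_sub_X_fPolyOrder (mem_filter.mp hq).2) fun q _ => ?_).imp_right ?_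
  · split_ifs
    exacts [isUnit_one.neg.isRegular, isRegular_one]
  · intro h
    rw [h, prod_ite, prod_const_one, mul_one, prod_const, filter_filter,
      ← card_pairs_fst_eq_zero k]
    congr 3
    ext q
    exact and_comm

theorem degree_prod_sum_Icc_X_fPolyOrder (k : ℕ) :
    (fPolyOrder k).degree (∏ q : Fin k × Fin k with 0 < (q.1 : ℕ) ∧ q.1 < q.2,
        ∑ l ∈ Icc q.1 q.2, (X l : MvPolynomial (Fin k) ℤ)) =
        ∑ q : Fin k × Fin k with 0 < (q.1 : ℕ) ∧ q.1 < q.2, single q.2 1 ∧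
      (fPolyOrder k).leadingCoeff (∏ q : Fin k × Fin k with 0 < (q.1 : ℕ) ∧ q.1 < q.2,
        ∑ l ∈ Icc q.1 q.2, (X l : MvPolynomial (Fin k) ℤ)) = 1 := by
  refine ((fPolyOrder k).degree_leadingCoeff_prod (fun q hq => degree_sum_Icc_X_fPolyOrder
    (mem_filter.mp hq).2.1 (mem_filter.mp hq).2.2.le) fun q _ => isRegular_one).imp_right ?_
  exact fun h => h.trans prod_const_one

theorem leadingCoeff_fPoly (k : ℕ) :
    (fPolyOrder k).leadingCoeff (fPoly k) = (-1) ^ (k - 1) := by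
  rw [fPoly, (fPolyOrder k).leadingCoeff_mul, (degree_prod_X_sub_X_fPolyOrder k).2,
    (degree_prod_sum_Icc_X_fPolyOrder k).2, mul_one]

theorem degree_fPoly (k : ℕ) :
    (fPolyOrder k).degree (fPoly k) = Finsupp.equivFunOnFinite.symm fun i : Fin k =>
      if (i : ℕ) = 0 then k - 1 else 2 * ((i : ℕ) - 1) := by
  have hne : fPoly k ≠ 0 :=
    (fPolyOrder k).leadingCoeff_ne_zero_iff.mp (by simp [leadingCoeff_fPoly])
  rw [fPoly] at hne ⊢
  ext i
  rw [(fPolyOrder k).degree_mul' hne, (degree_prod_X_sub_X_fPolyOrder k).1,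
    (degree_prod_sum_Icc_X_fPolyOrder k).1, Finsupp.add_apply, sum_single_ite_apply,
    sum_single_snd_apply, Finsupp.coe_equivFunOnFinite_symm]
  split_ifs <;> omega

theorem fPoly_coeff_general (k : ℕ) :
    MvPolynomial.coeff
      (Finsupp.equivFunOnFinite.symm fun i : Fin k =>
        if (i : ℕ) = 0 then k - 1 else 2 * ((i : ℕ) - 1))
      (fPoly k) = (-1) ^ (k - 1) := by
  rw [← degree_fPoly]
  exact leadingCoeff_fPoly k

/-- The coefficient of `x_1^{k-1} x_2^0 x_3^2 ⋯ x_k^{2k-4}` in `f_k` is `(-1)^{k-1}`: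
0-indexed, variable `0` has exponent `k-1` and variable `i ≥ 1` has exponent `2(i-1)`. -/
theorem fPoly_coeff (k : ℕ) (hk : 2 ≤ k) :
    MvPolynomial.coeff
      (Finsupp.equivFunOnFinite.symm fun i : Fin k =>
        if (i : ℕ) = 0 then k - 1 else 2 * ((i : ℕ) - 1))
      (fPoly k) = (-1) ^ (k - 1) :=
  fPoly_coeff_general k
end

section
/- Let γ = (γ_1, ..., γ_ℓ) be a graceful permutation of length ℓ and let α = (α_1, ..., α_{2t}) be a graceful permutation of length 2t such that α_{2i-1} > t for all 1 ≤ i ≤ t and α_1 = γ_ℓ + t. Then the sequence (γ_1 + t, γ_2 + t, ..., γ_ℓ + t, α_1 + ℓ, α_2, α_3 + ℓ, α_4, ..., α_{2t-1} + ℓ, α_{2t}) is a graceful permutation of length ℓ + 2t. -/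
/-!
On indices `≥ ℓ` the new sequence is `α` composed with the map raising values above `t` by `ℓ`:
the odd-indexed entries of `α` are `t` distinct values in `[t+1, 2t]`, so they are exactly the
entries above `t`. Hence the sequence takes the values `[t+1, t+ℓ]` on the `γ`-part and
`[1, t] ∪ [t+ℓ+1, 2t+ℓ]` on the `α`-part, and is a permutation of `[1, ℓ+2t]`. Consecutive
entries of `α` lie on opposite sides of `t`, so every difference in the `α`-part is the old one
plus `ℓ`, hence exceeds `ℓ`; differences along `γ` are below `ℓ`, and the junction difference
`α₁ + ℓ - (γ_ℓ + t)` is exactly `ℓ`. Differences are therefore distinct across the three parts,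
and within a part by the gracefulness of `γ` and of `α`.
-/

/-- `α` (indexed by `0, …, r-1`) is a graceful permutation of length `r`. -/
def IsGraceful (r : ℕ) (α : ℕ → ℤ) : Prop :=
  (Finset.range r).image α = Finset.Icc (1 : ℤ) (r : ℤ) ∧
  ∀ i j : ℕ, i + 1 < r → j + 1 < r → |α (i + 1) - α i| = |α (j + 1) - α j| → i = j

theorem Finset.image_range_eq_Icc_of_injOn {r : ℕ} {β : ℕ → ℤ}
    (hmaps : ∀ i < r, β i ∈ Finset.Icc 1 (r : ℤ)) (hinj : Set.InjOn β (Finset.range r)) :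
    (Finset.range r).image β = Finset.Icc 1 (r : ℤ) :=
  Finset.eq_of_subset_of_card_le (by simpa [Finset.image_subset_iff] using hmaps)
    (by rw [Finset.card_image_of_injOn hinj, Int.card_Icc, Finset.card_range]; omega)

namespace IsGraceful

variable {r : ℕ} {α : ℕ → ℤ}

theorem mem_Icc (h : IsGraceful r α) {i : ℕ} (hi : i < r) : α i ∈ Finset.Icc 1 (r : ℤ) :=
  h.1 ▸ Finset.mem_image_of_mem α (Finset.mem_range.2 hi)

theorem eq_of_apply_eq (h : IsGraceful r α) {i j : ℕ} (hi : i < r) (hj : j < r)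
    (he : α i = α j) : i = j :=
  Finset.injOn_of_card_image_eq (by rw [h.1, Int.card_Icc, Finset.card_range]; omega)
    (Finset.mem_coe.2 (Finset.mem_range.2 hi)) (Finset.mem_coe.2 (Finset.mem_range.2 hj)) he

theorem succ_ne (h : IsGraceful r α) {i : ℕ} (hi : i + 1 < r) : α (i + 1) ≠ α i := fun he =>
  absurd (h.eq_of_apply_eq hi (by omega) he) (by omega)

theorem abs_sub_succ_lt (h : IsGraceful r α) {i : ℕ} (hi : i + 1 < r) :
    |α (i + 1) - α i| < r := by
  have h₁ := Finset.mem_Icc.1 (h.mem_Icc hi)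
  have h₀ := Finset.mem_Icc.1 (h.mem_Icc (i := i) (by omega))
  rw [abs_lt]
  constructor <;> linarith [h₀.1, h₀.2, h₁.1, h₁.2]

theorem lt_iff_even {t : ℕ} (h : IsGraceful (2 * t) α) (hodd : ∀ i < t, (t : ℤ) < α (2 * i))
    {k : ℕ} (hk : k < 2 * t) : (t : ℤ) < α k ↔ k % 2 = 0 := by
  have hinj : Set.InjOn (fun i => α (2 * i)) (Finset.range t) := fun i hi j hj he => by
    simp only [Finset.coe_range, Set.mem_Iio] at hi hj
    have := h.eq_of_apply_eq (by omega) (by omega) he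
    omega
  -- the `t` distinct values `α (2 * i)` lie in `[t+1, 2t]`, so they fill it
  have himage : (Finset.range t).image (fun i => α (2 * i)) = Finset.Icc ((t : ℤ) + 1) (2 * t) := by
    refine Finset.eq_of_subset_of_card_le ?_ ?_
    · simp only [Finset.image_subset_iff, Finset.mem_range, Finset.mem_Icc]
      intro i hi
      have := Finset.mem_Icc.1 (h.mem_Icc (i := 2 * i) (by omega))
      push_cast at this
      exact ⟨by linarith [hodd i hi], this.2⟩
    · rw [Finset.card_image_of_injOn hinj, Int.card_Icc, Finset.card_range]; omega
  constructor
  · intro hlt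
    have hle := (Finset.mem_Icc.1 (h.mem_Icc hk)).2
    push_cast at hle
    obtain ⟨i, hi, he⟩ := Finset.mem_image.1 (himage ▸ Finset.mem_Icc.2 ⟨hlt, hle⟩)
    have := h.eq_of_apply_eq (by rw [Finset.mem_range] at hi; omega) hk he
    omega
  · intro he
    obtain ⟨i, rfl⟩ : ∃ i, k = 2 * i := ⟨k / 2, by omega⟩
    exact hodd i (by omega)

end IsGraceful

def shiftAbove (t ℓ : ℕ) (v : ℤ) : ℤ := if (t : ℤ) < v then v + ℓ else v

section shiftAbove

variable {t ℓ : ℕ}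

theorem shiftAbove_injective : Function.Injective (shiftAbove t ℓ) := fun a b => by
  unfold shiftAbove; split_ifs <;> omega

theorem shiftAbove_notMem_Ioc (v : ℤ) : shiftAbove t ℓ v ∉ Set.Ioc (t : ℤ) (t + ℓ) := by
  unfold shiftAbove; split_ifs <;> simp only [Set.mem_Ioc] <;> omega

theorem shiftAbove_mem_Icc {v : ℤ} (hv : v ∈ Finset.Icc 1 (2 * t : ℤ)) :
    shiftAbove t ℓ v ∈ Finset.Icc 1 ((ℓ + 2 * t : ℕ) : ℤ) := by
  rw [Finset.mem_Icc] at hv ⊢; unfold shiftAbove; split_ifs <;> omega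

theorem abs_shiftAbove_sub_shiftAbove {a b : ℤ} (hab : a ≤ t ↔ (t : ℤ) < b) :
    |shiftAbove t ℓ b - shiftAbove t ℓ a| = |b - a| + ℓ := by
  unfold shiftAbove
  by_cases ha : a ≤ t
  · rw [if_pos (hab.1 ha), if_neg (by omega), abs_of_nonneg (by omega), abs_of_nonneg (by omega)]
    ring
  · rw [if_neg (by omega), if_pos (by omega), abs_of_neg (by omega), abs_of_neg (by omega)]
    ring

end shiftAbove

def shiftConcat (ℓ t : ℕ) (γ α : ℕ → ℤ) (j : ℕ) : ℤ :=
  if j < ℓ then γ j + t else if (j - ℓ) % 2 = 0 then α (j - ℓ) + ℓ else α (j - ℓ)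

section shiftConcat

variable {ℓ t : ℕ} {γ α : ℕ → ℤ}

theorem shiftConcat_of_lt {j : ℕ} (hj : j < ℓ) : shiftConcat ℓ t γ α j = γ j + t :=
  if_pos hj

theorem shiftConcat_add (hα : IsGraceful (2 * t) α) (hodd : ∀ i < t, (t : ℤ) < α (2 * i))
    {k : ℕ} (hk : k < 2 * t) : shiftConcat ℓ t γ α (ℓ + k) = shiftAbove t ℓ (α k) := by
  simp only [shiftConcat, shiftAbove, Nat.add_sub_cancel_left, ← hα.lt_iff_even hodd hk]
  rw [if_neg (by omega)]

theorem shiftConcat_mem_Ioc_of_lt (hγ : IsGraceful ℓ γ) {j : ℕ} (hj : j < ℓ) :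
    shiftConcat ℓ t γ α j ∈ Set.Ioc (t : ℤ) (t + ℓ) := by
  have := Finset.mem_Icc.1 (hγ.mem_Icc hj)
  rw [shiftConcat_of_lt hj, Set.mem_Ioc]
  constructor <;> linarith [this.1, this.2]

theorem shiftConcat_mem_Icc (hγ : IsGraceful ℓ γ) (hα : IsGraceful (2 * t) α)
    (hodd : ∀ i < t, (t : ℤ) < α (2 * i)) {j : ℕ} (hj : j < ℓ + 2 * t) :
    shiftConcat ℓ t γ α j ∈ Finset.Icc 1 ((ℓ + 2 * t : ℕ) : ℤ) := by
  rcases lt_or_ge j ℓ with hjℓ | hjℓ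
  · have := shiftConcat_mem_Ioc_of_lt (α := α) (t := t) hγ hjℓ
    rw [Set.mem_Ioc] at this
    rw [Finset.mem_Icc]
    push_cast
    constructor <;> linarith [this.1, this.2]
  · obtain ⟨k, rfl⟩ := Nat.exists_eq_add_of_le hjℓ
    have hk : k < 2 * t := by omega
    rw [shiftConcat_add hα hodd hk]
    exact shiftAbove_mem_Icc (by exact_mod_cast hα.mem_Icc hk)

theorem shiftConcat_injOn (hγ : IsGraceful ℓ γ) (hα : IsGraceful (2 * t) α)
    (hodd : ∀ i < t, (t : ℤ) < α (2 * i)) :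
    Set.InjOn (shiftConcat ℓ t γ α) (Finset.range (ℓ + 2 * t)) := by
  have hcross : ∀ i j, i < ℓ → j < ℓ + 2 * t → ℓ ≤ j →
      shiftConcat ℓ t γ α i ≠ shiftConcat ℓ t γ α j := by
    intro i j hi hj hjℓ he
    obtain ⟨k, rfl⟩ := Nat.exists_eq_add_of_le hjℓ
    rw [shiftConcat_add hα hodd (by omega)] at he
    exact shiftAbove_notMem_Ioc _ (he ▸ shiftConcat_mem_Ioc_of_lt hγ hi)
  intro i hi j hj he
  simp only [Finset.coe_range, Set.mem_Iio] at hi hj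
  rcases lt_or_ge i ℓ with hiℓ | hiℓ <;> rcases lt_or_ge j ℓ with hjℓ | hjℓ
  · rw [shiftConcat_of_lt hiℓ, shiftConcat_of_lt hjℓ, add_left_inj] at he
    exact hγ.eq_of_apply_eq hiℓ hjℓ he
  · exact absurd he (hcross i j hiℓ hj hjℓ)
  · exact absurd he.symm (hcross j i hjℓ hi hiℓ)
  · obtain ⟨k, rfl⟩ := Nat.exists_eq_add_of_le hiℓ
    obtain ⟨m, rfl⟩ := Nat.exists_eq_add_of_le hjℓ
    rw [shiftConcat_add hα hodd (by omega), shiftConcat_add hα hodd (by omega)] at he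
    rw [hα.eq_of_apply_eq (by omega) (by omega) (shiftAbove_injective he)]

theorem abs_sub_shiftConcat_of_lt {i : ℕ} (hi : i + 1 < ℓ) :
    |shiftConcat ℓ t γ α (i + 1) - shiftConcat ℓ t γ α i| = |γ (i + 1) - γ i| := by
  rw [shiftConcat_of_lt hi, shiftConcat_of_lt (by omega), add_sub_add_right_eq_sub]

theorem abs_sub_shiftConcat_of_succ_eq (hα : IsGraceful (2 * t) α)
    (hodd : ∀ i < t, (t : ℤ) < α (2 * i)) (hfirst : α 0 = γ (ℓ - 1) + t) (ht : 0 < t)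
    {i : ℕ} (hi : i + 1 = ℓ) :
    |shiftConcat ℓ t γ α (i + 1) - shiftConcat ℓ t γ α i| = ℓ := by
  have hα0 := shiftConcat_add (ℓ := ℓ) (γ := γ) hα hodd (k := 0) (by omega)
  rw [add_zero, shiftAbove, if_pos (hodd 0 ht)] at hα0
  subst hi
  rw [Nat.add_sub_cancel] at hfirst
  rw [hα0, shiftConcat_of_lt (by omega), hfirst, add_sub_cancel_left, abs_of_nonneg (by positivity)]

theorem abs_sub_shiftConcat_add (hα : IsGraceful (2 * t) α)
    (hodd : ∀ i < t, (t : ℤ) < α (2 * i)) {k : ℕ} (hk : k + 1 < 2 * t) :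
    |shiftConcat ℓ t γ α (ℓ + k + 1) - shiftConcat ℓ t γ α (ℓ + k)| = |α (k + 1) - α k| + ℓ := by
  rw [add_assoc, shiftConcat_add hα hodd hk, shiftConcat_add hα hodd (by omega)]
  apply abs_shiftAbove_sub_shiftAbove
  rw [← not_lt, hα.lt_iff_even hodd (by omega), hα.lt_iff_even hodd hk]
  omega

theorem compare_abs_sub_shiftConcat (hγ : IsGraceful ℓ γ) (hα : IsGraceful (2 * t) α)
    (hodd : ∀ i < t, (t : ℤ) < α (2 * i)) (hfirst : α 0 = γ (ℓ - 1) + t) {i : ℕ}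
    (hi : i + 1 < ℓ + 2 * t) :
    compare |shiftConcat ℓ t γ α (i + 1) - shiftConcat ℓ t γ α i| (ℓ : ℤ) = compare (i + 1) ℓ := by
  rcases lt_trichotomy (i + 1) ℓ with hiℓ | hiℓ | hiℓ
  · rw [compare_lt_iff_lt.2 hiℓ, compare_lt_iff_lt, abs_sub_shiftConcat_of_lt hiℓ]
    exact hγ.abs_sub_succ_lt hiℓ
  · rw [compare_eq_iff_eq.2 hiℓ, compare_eq_iff_eq,
      abs_sub_shiftConcat_of_succ_eq hα hodd hfirst (by omega) hiℓ]
  · obtain ⟨k, rfl⟩ := Nat.exists_eq_add_of_le (Nat.le_of_lt_succ hiℓ)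
    rw [compare_gt_iff_gt.2 hiℓ, compare_gt_iff_gt, abs_sub_shiftConcat_add hα hodd (by omega),
      lt_add_iff_pos_left, abs_pos, sub_ne_zero]
    exact hα.succ_ne (by omega)

theorem abs_sub_shiftConcat_injective (hγ : IsGraceful ℓ γ) (hα : IsGraceful (2 * t) α)
    (hodd : ∀ i < t, (t : ℤ) < α (2 * i)) (hfirst : α 0 = γ (ℓ - 1) + t) {i j : ℕ}
    (hi : i + 1 < ℓ + 2 * t) (hj : j + 1 < ℓ + 2 * t)
    (he : |shiftConcat ℓ t γ α (i + 1) - shiftConcat ℓ t γ α i| =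
      |shiftConcat ℓ t γ α (j + 1) - shiftConcat ℓ t γ α j|) : i = j := by
  have hcmp := compare_abs_sub_shiftConcat hγ hα hodd hfirst hi
  rw [he, compare_abs_sub_shiftConcat hγ hα hodd hfirst hj] at hcmp
  rcases lt_trichotomy (i + 1) ℓ with hiℓ | hiℓ | hiℓ
  · rw [compare_lt_iff_lt.2 hiℓ, compare_lt_iff_lt] at hcmp
    rw [abs_sub_shiftConcat_of_lt hiℓ, abs_sub_shiftConcat_of_lt hcmp] at he
    exact hγ.2 i j hiℓ hcmp he
  · rw [compare_eq_iff_eq.2 hiℓ, compare_eq_iff_eq] at hcmp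
    omega
  · rw [compare_gt_iff_gt.2 hiℓ, compare_gt_iff_gt] at hcmp
    obtain ⟨k, rfl⟩ := Nat.exists_eq_add_of_le (Nat.le_of_lt_succ hiℓ)
    obtain ⟨m, rfl⟩ := Nat.exists_eq_add_of_le (Nat.le_of_lt_succ hcmp)
    rw [abs_sub_shiftConcat_add hα hodd (by omega), abs_sub_shiftConcat_add hα hodd (by omega),
      add_left_inj] at he
    rw [hα.2 k m (by omega) (by omega) he]

end shiftConcat

theorem graceful_concat_general (ℓ t : ℕ)
    (γ α : ℕ → ℤ) (hγ : IsGraceful ℓ γ) (hα : IsGraceful (2 * t) α)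
    (hodd : ∀ i < t, (t : ℤ) < α (2 * i))
    (hfirst : α 0 = γ (ℓ - 1) + t) :
    IsGraceful (ℓ + 2 * t)
      (fun j => if j < ℓ then γ j + t
        else if (j - ℓ) % 2 = 0 then α (j - ℓ) + ℓ else α (j - ℓ)) :=
  ⟨Finset.image_range_eq_Icc_of_injOn (fun _ hj => shiftConcat_mem_Icc hγ hα hodd hj)
      (shiftConcat_injOn hγ hα hodd),
    fun _ _ hi hj => abs_sub_shiftConcat_injective hγ hα hodd hfirst hi hj⟩

/-- Concatenation construction: if `γ` is graceful of length `ℓ` and `α` is graceful of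
length `2t` with all odd-position (1-indexed) entries `> t` and `α_1 = γ_ℓ + t`, then
`(γ_1 + t, …, γ_ℓ + t, α_1 + ℓ, α_2, α_3 + ℓ, α_4, …, α_{2t-1} + ℓ, α_{2t})` is graceful of
length `ℓ + 2t`. -/
theorem graceful_concat (ℓ t : ℕ) (hℓ : 1 ≤ ℓ) (ht : 1 ≤ t)
    (γ α : ℕ → ℤ) (hγ : IsGraceful ℓ γ) (hα : IsGraceful (2 * t) α)
    (hodd : ∀ i < t, (t : ℤ) < α (2 * i))
    (hfirst : α 0 = γ (ℓ - 1) + t) :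
    IsGraceful (ℓ + 2 * t)
      (fun j => if j < ℓ then γ j + t
        else if (j - ℓ) % 2 = 0 then α (j - ℓ) + ℓ else α (j - ℓ)) :=
  graceful_concat_general ℓ t γ α hγ hα hodd hfirst
end
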